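/- Assume b = 0, a·μ₀ = d, 3·a·k > d³, c₂² − 4·c₁·c₃ ≥ 0 and k/kₛ < (c₂ − √(c₂² − 4·c₁·c₃))/(2·c₃). Then every positive real root ẑ of h satisfies D(ẑ) > 0 and c₃·ẑ⁶ − c₂·ẑ⁴ + c₁·ẑ² + c₀ > 0; in particular there exists ε₀ > 0 such that for all ε ∈ (0, ε₀) one has T(ẑ) > 0, so at the positive fixed point (ẑ, kₛ·ẑ⁴) the Jacobian of f has positive trace and positive determinant (the fixed point is an unstable source). -/

import Mathlib

/-!
At a positive root `ẑ` of `h` put `ψ = a ẑ (−kₛ ẑ⁴ + k ẑ² + μ₀)`, so that `tanh ψ = d ẑ`. Since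
`a μ₀ = d`, `ψ − tanh ψ = a ẑ³ (k − kₛ ẑ²)`. Two elementary facts about `tanh` on `(0, ∞)`,
`tanh x < x` and `3 (x − tanh x)(1 − tanh² x) < tanh³ x`, then give `k − kₛ ẑ² > 0` and
`3 a (k − kₛ ẑ²)(1 − d² ẑ²) < d³`. The second bound makes `D(ẑ)` positive; the first puts `ẑ²`
below `k / kₛ`, hence below the smaller root of `c₃ u² − c₂ u + c₁`, where this quadratic is
positive, and `c₃ ẑ⁶ − c₂ ẑ⁴ + c₁ ẑ² + c₀ = ẑ² (c₃ ẑ⁴ − c₂ ẑ² + c₁)` because `c₀ = 0`.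
-/

open Real

lemma pos_of_hasDerivAt_pos_of_map_zero {f f' : ℝ → ℝ} (hf : ∀ y, HasDerivAt f (f' y) y)
    (hf' : ∀ y, 0 < y → 0 < f' y) (h0 : f 0 = 0) {x : ℝ} (hx : 0 < x) : 0 < f x := by
  have hmono : StrictMonoOn f (Set.Ici 0) :=
    strictMonoOn_of_hasDerivWithinAt_pos (convex_Ici 0)
      (fun y _ => (hf y).continuousAt.continuousWithinAt) (fun y _ => (hf y).hasDerivWithinAt)
      (fun y hy => hf' y (by simpa using hy))
  simpa [h0] using hmono Set.self_mem_Ici hx.le hx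

namespace Real

lemma tanh_pos_iff {x : ℝ} : 0 < tanh x ↔ 0 < x := by
  rw [tanh_eq_sinh_div_cosh, div_pos_iff_of_pos_right (cosh_pos x), sinh_pos_iff]

lemma sinh_lt_mul_cosh {x : ℝ} (hx : 0 < x) : sinh x < x * cosh x := by
  have hderiv (y : ℝ) : HasDerivAt (fun t => t * cosh t - sinh t) (y * sinh y) y := by
    refine (((hasDerivAt_id' y).mul (hasDerivAt_cosh y)).sub (hasDerivAt_sinh y)).congr_deriv ?_
    ring
  have := pos_of_hasDerivAt_pos_of_map_zero hderiv
    (fun y hy => mul_pos hy (sinh_pos_iff.mpr hy)) (by simp) hx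
  linarith

lemma tanh_lt_self {x : ℝ} (hx : 0 < x) : tanh x < x := by
  rw [tanh_eq_sinh_div_cosh, div_lt_iff₀ (cosh_pos x)]
  exact sinh_lt_mul_cosh hx

lemma three_mul_mul_cosh_lt {x : ℝ} (hx : 0 < x) :
    3 * x * cosh x < sinh x ^ 3 + 3 * sinh x := by
  have hderiv (y : ℝ) : HasDerivAt (fun t => sinh t ^ 3 + 3 * sinh t - 3 * t * cosh t)
      (3 * sinh y * (sinh y * cosh y - y)) y := by
    refine ((((hasDerivAt_sinh y).pow 3).add ((hasDerivAt_sinh y).const_mul 3)).sub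
      (((hasDerivAt_id' y).const_mul 3).mul (hasDerivAt_cosh y))).congr_deriv ?_
    push_cast
    ring
  have hsinh_cosh (y : ℝ) (hy : 0 < y) : y < sinh y * cosh y := by
    have := self_lt_sinh_iff.mpr (by linarith : 0 < 2 * y)
    rw [sinh_two_mul] at this
    linarith
  have := pos_of_hasDerivAt_pos_of_map_zero hderiv
    (fun y hy => mul_pos (mul_pos three_pos (sinh_pos_iff.mpr hy))
      (sub_pos.mpr (hsinh_cosh y hy))) (by simp) hx
  linarith

lemma three_mul_sub_tanh_mul_one_sub_tanh_sq_lt {x : ℝ} (hx : 0 < x) :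
    3 * (x - tanh x) * (1 - tanh x ^ 2) < tanh x ^ 3 := by
  have hc := cosh_pos x
  have hsq : cosh x ^ 2 - sinh x ^ 2 = 1 := by rw [cosh_sq]; ring
  rw [tanh_eq_sinh_div_cosh]
  have key := three_mul_mul_cosh_lt hx
  field_simp
  rw [hsq]
  linarith

end Real

lemma quadratic_pos_of_lt_smaller_root {a b c u : ℝ} (ha : 0 < a) (hdisc : 0 ≤ b ^ 2 - 4 * a * c)
    (hu : u < (b - √(b ^ 2 - 4 * a * c)) / (2 * a)) : 0 < a * u ^ 2 - b * u + c := by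
  set s := √(b ^ 2 - 4 * a * c)
  have hs : s ^ 2 = b ^ 2 - 4 * a * c := sq_sqrt hdisc
  rw [lt_div_iff₀ (by positivity)] at hu
  have hneg₁ : 2 * a * u - b - s < 0 := by linarith [sqrt_nonneg (b ^ 2 - 4 * a * c)]
  have hneg₂ : 2 * a * u - b + s < 0 := by linarith
  have hfactor : 4 * a * (a * u ^ 2 - b * u + c) = (2 * a * u - b - s) * (2 * a * u - b + s) := by
    linear_combination hs
  exact pos_of_mul_pos_right (hfactor ▸ mul_pos_of_neg_of_neg hneg₁ hneg₂) (by positivity)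

lemma snod_root_bounds {a d k ks μ0 z : ℝ} (hd : 0 < d) (hz : 0 < z) (hcrit : a * μ0 = d)
    (hroot : -d * z + tanh (a * z * (-ks * z ^ 4 + k * z ^ 2 + μ0)) = 0) :
    0 < a * (k - ks * z ^ 2) ∧ 0 < 1 - d ^ 2 * z ^ 2 ∧
      3 * a * (k - ks * z ^ 2) * (1 - d ^ 2 * z ^ 2) < d ^ 3 := by
  set ψ := a * z * (-ks * z ^ 4 + k * z ^ 2 + μ0)
  have htanh : tanh ψ = d * z := by linarith
  have hψ : 0 < ψ := tanh_pos_iff.mp (htanh ▸ mul_pos hd hz)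
  have hgap : ψ - tanh ψ = z ^ 3 * (a * (k - ks * z ^ 2)) := by
    rw [htanh]; linear_combination z * hcrit
  have hP : 1 - tanh ψ ^ 2 = 1 - d ^ 2 * z ^ 2 := by rw [htanh]; ring
  refine ⟨?_, ?_, ?_⟩
  · refine pos_of_mul_pos_right ?_ (pow_pos hz 3).le
    rw [← hgap]
    linarith [tanh_lt_self hψ]
  · linarith [tanh_sq_lt_one ψ]
  · have key := three_mul_sub_tanh_mul_one_sub_tanh_sq_lt hψ
    rw [hgap, hP, htanh] at key
    refine lt_of_mul_lt_mul_left ?_ (pow_pos hz 3).le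
    linear_combination key

lemma snod_detPoly_pos {a d k ks μ0 z : ℝ} (ha : 0 < a) (hks : 0 < ks) (hz : 0 < z)
    (hcrit : a * μ0 = d) (hP : 0 < 1 - d ^ 2 * z ^ 2)
    (hbound : 3 * a * (k - ks * z ^ 2) * (1 - d ^ 2 * z ^ 2) < d ^ 3) :
    0 < -5 * (a * d ^ 2 * ks) * z ^ 6 + (3 * a * d ^ 2 * k + a * ks + 4 * a * ks) * z ^ 4 -
      (3 * a * k - a * d ^ 2 * μ0) * z ^ 2 - (a * μ0 - d) := by
  have hfactor : -5 * (a * d ^ 2 * ks) * z ^ 6 + (3 * a * d ^ 2 * k + a * ks + 4 * a * ks) * z ^ 4 -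
      (3 * a * k - a * d ^ 2 * μ0) * z ^ 2 - (a * μ0 - d) =
      z ^ 2 * ((d ^ 3 - 3 * a * (k - ks * z ^ 2) * (1 - d ^ 2 * z ^ 2)) +
        2 * a * ks * z ^ 2 * (1 - d ^ 2 * z ^ 2)) := by
    linear_combination (d ^ 2 * z ^ 2 - 1) * hcrit
  rw [hfactor]
  have := sub_pos.mpr hbound
  positivity

theorem snod_positive_root_unstable_source_general
    (a d k ks μ0 : ℝ)
    (ha : 0 < a) (hd : 0 < d) (hks : 0 < ks)
    (c3 c2 c1 c0 : ℝ)
    (hc3 : c3 = a * d ^ 2 * ks) (hc2 : c2 = 3 * a * d ^ 2 * k + a * ks)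
    (hc1 : c1 = 3 * a * k - a * d ^ 2 * μ0) (hc0 : c0 = a * μ0 - d)
    (D : ℝ → ℝ)
    (hD : D = fun z => -5 * c3 * z ^ 6 + (c2 + 4 * a * ks) * z ^ 4 - c1 * z ^ 2 - c0)
    (hcrit : a * μ0 = d)
    (hdisc : c2 ^ 2 - 4 * c1 * c3 ≥ 0)
    (hkks : k / ks < (c2 - Real.sqrt (c2 ^ 2 - 4 * c1 * c3)) / (2 * c3)) :
    ∀ zhat : ℝ, 0 < zhat →
      -d * zhat + Real.tanh (a * zhat * (-ks * zhat ^ 4 + k * zhat ^ 2 + μ0)) = 0 →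
      0 < D zhat ∧
      0 < c3 * zhat ^ 6 - c2 * zhat ^ 4 + c1 * zhat ^ 2 + c0 ∧
      ∃ ε0 : ℝ, 0 < ε0 ∧ ∀ ε : ℝ, 0 < ε → ε < ε0 →
        0 < c3 * zhat ^ 6 - c2 * zhat ^ 4 + c1 * zhat ^ 2 + c0 - ε ∧
        0 < ε * D zhat := by
  intro z hz hroot
  obtain ⟨hv, hP, hbound⟩ := snod_root_bounds hd hz hcrit hroot
  have hDz : 0 < D z := by
    subst hD hc3 hc2 hc1 hc0
    exact snod_detPoly_pos ha hks hz hcrit hP hbound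
  have hT : 0 < c3 * z ^ 6 - c2 * z ^ 4 + c1 * z ^ 2 + c0 := by
    have hzk : z ^ 2 < k / ks := by
      rw [lt_div_iff₀ hks]
      linarith [pos_of_mul_pos_right hv ha.le]
    rw [mul_right_comm 4 c1 c3] at hdisc hkks
    have hQ := quadratic_pos_of_lt_smaller_root (by rw [hc3]; positivity) hdisc (hzk.trans hkks)
    calc 0 < z ^ 2 * (c3 * (z ^ 2) ^ 2 - c2 * z ^ 2 + c1) := mul_pos (pow_pos hz 2) hQ
      _ = c3 * z ^ 6 - c2 * z ^ 4 + c1 * z ^ 2 + c0 := by rw [hc0, hcrit]; ring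
  exact ⟨hDz, hT, _, hT, fun ε hε hεT => ⟨by linarith, mul_pos hε hDz⟩⟩

/-- Assume `b = 0`, `a·μ₀ = d`, `3·a·k > d³`,
`c₂² − 4·c₁·c₃ ≥ 0` and `k/kₛ < (c₂ − √(c₂² − 4·c₁·c₃))/(2·c₃)`. Then every
positive real root `ẑ` of `h` satisfies `D(ẑ) > 0` and
`c₃·ẑ⁶ − c₂·ẑ⁴ + c₁·ẑ² + c₀ > 0`; in particular there exists `ε₀ > 0` such that
for all `ε ∈ (0, ε₀)` one has `T(ẑ) = c₃·ẑ⁶ − c₂·ẑ⁴ + c₁·ẑ² + c₀ − ε > 0`, so at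
the positive fixed point `(ẑ, kₛ·ẑ⁴)` the Jacobian of `f` has positive trace
`T(ẑ)` and positive determinant `ε·D(ẑ)` (the fixed point is an unstable
source). -/
theorem snod_positive_root_unstable_source
    (a d k ks μ0 : ℝ)
    (ha : 0 < a) (hd : 0 < d) (hk : 0 < k) (hks : 0 < ks) (hμ0 : 0 < μ0)
    (c3 c2 c1 c0 : ℝ)
    (hc3 : c3 = a * d ^ 2 * ks) (hc2 : c2 = 3 * a * d ^ 2 * k + a * ks)
    (hc1 : c1 = 3 * a * k - a * d ^ 2 * μ0) (hc0 : c0 = a * μ0 - d)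
    (D : ℝ → ℝ)
    (hD : D = fun z => -5 * c3 * z ^ 6 + (c2 + 4 * a * ks) * z ^ 4 - c1 * z ^ 2 - c0)
    (hcrit : a * μ0 = d) (hkbig : 3 * a * k > d ^ 3)
    (hdisc : c2 ^ 2 - 4 * c1 * c3 ≥ 0)
    (hkks : k / ks < (c2 - Real.sqrt (c2 ^ 2 - 4 * c1 * c3)) / (2 * c3)) :
    ∀ zhat : ℝ, 0 < zhat →
      -d * zhat + Real.tanh (a * zhat * (-ks * zhat ^ 4 + k * zhat ^ 2 + μ0)) = 0 →
      0 < D zhat ∧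
      0 < c3 * zhat ^ 6 - c2 * zhat ^ 4 + c1 * zhat ^ 2 + c0 ∧
      ∃ ε0 : ℝ, 0 < ε0 ∧ ∀ ε : ℝ, 0 < ε → ε < ε0 →
        0 < c3 * zhat ^ 6 - c2 * zhat ^ 4 + c1 * zhat ^ 2 + c0 - ε ∧
        0 < ε * D zhat :=
  snod_positive_root_unstable_source_general a d k ks μ0 ha hd hks c3 c2 c1 c0 hc3 hc2 hc1 hc0 D hD
    hcrit hdisc hkks
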